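/- Let X and Y be finite types and ε ≥ 0 a real. Let q, q̂, s, ŝ : X × Y → ℝ be nonnegative functions such that: (i) (1−ε)·s(x,y) ≤ ŝ(x,y) ≤ (1+ε)·s(x,y) for all (x,y); (ii) for every x ∈ X, ∑_{y ∈ Y} |q(x,y) − q̂(x,y)| ≤ ε; (iii) ∑_{(x,y)} q(x,y)·s(x,y) ≤ 1; and (iv) ŝ(x,y) ≤ 1 for all (x,y). Then ∑_{(x,y)} |q(x,y)·s(x,y) − q̂(x,y)·ŝ(x,y)| ≤ ε·(1 + |X|). -/

import Mathlib

/-!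
Split `q s - q̂ ŝ = q (s - ŝ) + (q - q̂) ŝ`. Since `ŝ` is within relative error `ε` of `s`, the
first term is at most `ε q s`, which sums to at most `ε`; since `0 ≤ ŝ ≤ 1`, the second is at
most `|q - q̂|`, which sums to at most `ε` over each of the `|X|` rows.
-/

section Pointwise

variable {α : Type*} [CommRing α] [LinearOrder α] [IsStrictOrderedRing α]

theorem abs_sub_le_mul_of_relative_bounds {ε s t : α}
    (hlo : (1 - ε) * s ≤ t) (hhi : t ≤ (1 + ε) * s) : |s - t| ≤ ε * s :=
  abs_sub_le_iff.mpr ⟨by linarith, by linarith⟩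

theorem abs_mul_sub_mul_le_of_relative_bounds {ε q q' s t : α} (hq : 0 ≤ q)
    (ht₀ : 0 ≤ t) (ht₁ : t ≤ 1) (hst : |s - t| ≤ ε * s) :
    |q * s - q' * t| ≤ ε * (q * s) + |q - q'| :=
  calc |q * s - q' * t| = |q * (s - t) + (q - q') * t| := by ring_nf
    _ ≤ |q * (s - t)| + |(q - q') * t| := abs_add_le _ _
    _ = q * |s - t| + |q - q'| * t := by
        rw [abs_mul, abs_mul, abs_of_nonneg hq, abs_of_nonneg ht₀]
    _ ≤ q * (ε * s) + |q - q'| * 1 := by gcongr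
    _ = ε * (q * s) + |q - q'| := by ring

end Pointwise

theorem Fintype.sum_prod_le_card_mul {X Y M : Type*} [Fintype X] [Fintype Y]
    [AddCommMonoid M] [PartialOrder M] [IsOrderedAddMonoid M] {f : X × Y → M} {c : M}
    (h : ∀ x, ∑ y, f (x, y) ≤ c) : ∑ xy, f xy ≤ Fintype.card X • c := by
  rw [Fintype.sum_prod_type]
  simpa using Finset.sum_le_sum fun x (_ : x ∈ Finset.univ) => h x

theorem stmt_3_general {X Y : Type*} [Fintype X] [Fintype Y] (ε : ℝ) (hε : 0 ≤ ε)
    (q qhat s shat : X × Y → ℝ)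
    (hq : ∀ xy, 0 ≤ q xy)
    (hshat : ∀ xy, 0 ≤ shat xy)
    (h1 : ∀ xy, (1 - ε) * s xy ≤ shat xy ∧ shat xy ≤ (1 + ε) * s xy)
    (h2 : ∀ x : X, ∑ y : Y, |q (x, y) - qhat (x, y)| ≤ ε)
    (h3 : ∑ xy : X × Y, q xy * s xy ≤ 1)
    (h4 : ∀ xy, shat xy ≤ 1) :
    ∑ xy : X × Y, |q xy * s xy - qhat xy * shat xy| ≤ ε * (1 + Fintype.card X) := by
  have hq_diff : ∑ xy, |q xy - qhat xy| ≤ Fintype.card X * ε := by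
    simpa using Fintype.sum_prod_le_card_mul (f := fun xy => |q xy - qhat xy|) h2
  calc ∑ xy, |q xy * s xy - qhat xy * shat xy|
      ≤ ∑ xy, (ε * (q xy * s xy) + |q xy - qhat xy|) :=
        Finset.sum_le_sum fun xy _ => abs_mul_sub_mul_le_of_relative_bounds (hq xy) (hshat xy)
          (h4 xy) (abs_sub_le_mul_of_relative_bounds (h1 xy).1 (h1 xy).2)
    _ = ε * ∑ xy, q xy * s xy + ∑ xy, |q xy - qhat xy| := by
        rw [Finset.sum_add_distrib, Finset.mul_sum]
    _ ≤ ε * 1 + Fintype.card X * ε := by gcongr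
    _ = ε * (1 + Fintype.card X) := by ring

theorem stmt_3 {X Y : Type*} [Fintype X] [Fintype Y] (ε : ℝ) (hε : 0 ≤ ε)
    (q qhat s shat : X × Y → ℝ)
    (hq : ∀ xy, 0 ≤ q xy) (hqhat : ∀ xy, 0 ≤ qhat xy)
    (hs : ∀ xy, 0 ≤ s xy) (hshat : ∀ xy, 0 ≤ shat xy)
    (h1 : ∀ xy, (1 - ε) * s xy ≤ shat xy ∧ shat xy ≤ (1 + ε) * s xy)
    (h2 : ∀ x : X, ∑ y : Y, |q (x, y) - qhat (x, y)| ≤ ε)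
    (h3 : ∑ xy : X × Y, q xy * s xy ≤ 1)
    (h4 : ∀ xy, shat xy ≤ 1) :
    ∑ xy : X × Y, |q xy * s xy - qhat xy * shat xy| ≤ ε * (1 + Fintype.card X) :=
  stmt_3_general ε hε q qhat s shat hq hshat h1 h2 h3 h4
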